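/- arXiv:1303.7146 — 3 statements merged into one kernel-verified Lean document; each statement's English description precedes it below -/
import Mathlib

section
/- There exists a bounded hyperconvex diversity (X, δ) whose induced metric space (X, d) (which is also bounded) is not a hyperconvex metric space. -/
/-!
The example is the tight span `T` of the diversity `δ₀` on three points with `δ₀ = 2` on pairs and
`δ₀ = 4` on the whole set. A point of `T` is a function on subsets of `Fin 3`, determined by its
values `a` on singletons, and the diversity of a finite set `F` of points is the supremum over
patterns `γ : F → Finset (Fin 3)` of `δ₀ (⋃ γ) - ∑ x, x (γ x)`; it is bounded by `4`.

It is hyperconvex: for admissible `r`, the least cost `demand r U` of covering `U` by patterns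
paid for by `r` is subadditive and dominates `δ₀`, and its values on singletons, capped at `2`,
are a point of `T` that serves as `z`.

The Kuratowski images of the three points are pairwise at distance `2`, but their diversity is
`4 > 3`, so the balls of radius `1` around them meet pairwise and have no common point.
-/

/-- A diversity on `X`: a real-valued function on finite subsets of `X` which is
nonnegative, vanishes exactly on sets of cardinality at most one, and satisfies the
triangle inequality `δ(A ∪ C) ≤ δ(A ∪ B) + δ(B ∪ C)` for nonempty `B`. -/
structure Diversity (X : Type*) [DecidableEq X] where
  delta : Finset X → ℝ
  nonneg : ∀ A, 0 ≤ delta A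
  eq_zero_iff : ∀ A, delta A = 0 ↔ A.card ≤ 1
  triangle : ∀ A B C : Finset X, B.Nonempty →
    delta (A ∪ C) ≤ delta (A ∪ B) + delta (B ∪ C)

namespace Diversity

variable {X : Type*} [DecidableEq X]

/-- A diversity is hyperconvex if for every `r : ⟨X⟩ → ℝ` with `r ∅ = 0` such that
`δ(⋃_{A ∈ 𝒜} A) ≤ ∑_{A ∈ 𝒜} r A` for every finite collection `𝒜` of finite subsets
of `X`, there is `z ∈ X` with `δ({z} ∪ Y) ≤ r Y` for all finite `Y ⊆ X`. -/
def Hyperconvex (D : Diversity X) : Prop :=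
  ∀ r : Finset X → ℝ, r ∅ = 0 →
    (∀ 𝒜 : Finset (Finset X), D.delta (𝒜.sup id) ≤ ∑ A ∈ 𝒜, r A) →
    ∃ z : X, ∀ Y : Finset X, D.delta (insert z Y) ≤ r Y

/-- A diversity is bounded if its values are uniformly bounded above. -/
def Bounded (D : Diversity X) : Prop :=
  ∃ M : ℝ, 0 ≤ M ∧ ∀ A : Finset X, D.delta A ≤ M

end Diversity

namespace Diversity

variable {X : Type*} [DecidableEq X]

/-- The closed ball of center `x` and radius `r` of the metric space induced by a
diversity (`d(x, y) = δ {x, y}`). -/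
def ball (D : Diversity X) (x : X) (r : ℝ) : Set X :=
  {y : X | D.delta {x, y} ≤ r}

/-- Hyperconvexity of the metric space induced by a diversity: every family of closed
balls whose radii are nonnegative and satisfy `d(x_α, x_β) ≤ r_α + r_β` has nonempty
intersection. -/
def InducedHyperconvex (D : Diversity X) : Prop :=
  ∀ s : Set (X × ℝ), (∀ p ∈ s, 0 ≤ p.2) →
    (∀ p ∈ s, ∀ q ∈ s, D.delta {p.1, q.1} ≤ p.2 + q.2) →
    (⋂ p ∈ s, D.ball p.1 p.2).Nonempty

end Diversity

open Finset

namespace Diversity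

variable {X : Type*} [DecidableEq X] (D : Diversity X)

theorem delta_pair_self (x : X) : D.delta {x, x} = 0 := by
  simp [D.eq_zero_iff]

theorem delta_triple_le (x y z w : X) :
    D.delta {x, y, z} ≤ D.delta {x, w} + D.delta {w, y} + D.delta {w, z} := by
  have h₁ := D.triangle {x} {w} {y, z} (singleton_nonempty w)
  have h₂ := D.triangle {w, y} {w} {w, z} (singleton_nonempty w)
  have e₁ : ({w, y} : Finset X) ∪ {w, z} = {w, y, z} := by ext; simp
  have e₂ : ({w, y} : Finset X) ∪ {w} = {w, y} := by ext; simp; tauto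
  have e₃ : ({w} : Finset X) ∪ {w, z} = {w, z} := by simp
  rw [e₁, e₂, e₃] at h₂
  simp only [← insert_eq] at h₁
  linarith

/-- A common point `w` of the balls of radius `ρ` would give `δ {x, y, z} ≤ 3ρ` through
`delta_triple_le`. -/
theorem not_inducedHyperconvex_of_delta_triple {x y z : X} {ρ : ℝ} (hρ : 0 ≤ ρ)
    (hxy : D.delta {x, y} ≤ 2 * ρ) (hxz : D.delta {x, z} ≤ 2 * ρ)
    (hyz : D.delta {y, z} ≤ 2 * ρ) (h : 3 * ρ < D.delta {x, y, z}) :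
    ¬ D.InducedHyperconvex := by
  intro hD
  have hdist : ∀ a ∈ ({x, y, z} : Set X), ∀ b ∈ ({x, y, z} : Set X),
      D.delta {a, b} ≤ 2 * ρ := by
    rintro a (rfl | rfl | rfl) b (rfl | rfl | rfl) <;> try rw [delta_pair_self]
    all_goals first | linarith | rw [pair_comm]; assumption
  obtain ⟨w, hw⟩ := hD ((·, ρ) '' {x, y, z}) (Set.forall_mem_image.2 fun _ _ => hρ)
    (Set.forall_mem_image.2 fun a ha => Set.forall_mem_image.2 fun b hb => by
      linarith [hdist a ha b hb])
  simp only [Set.mem_iInter, Set.forall_mem_image, ball] at hw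
  have hx : D.delta {x, w} ≤ ρ := hw (by simp)
  have hy : D.delta {y, w} ≤ ρ := hw (by simp)
  have hz : D.delta {z, w} ≤ ρ := hw (by simp)
  have := D.delta_triple_le x y z w
  rw [pair_comm w y, pair_comm w z] at this
  linarith

end Diversity

section Span

variable {ι E : Type*} [DecidableEq E]

def spanValue (δ₀ : Finset E → ℝ) (f : ι → Finset E → ℝ) (F : Finset ι) (γ : ι → Finset E) :
    ℝ :=
  δ₀ (F.sup γ) - ∑ x ∈ F, f x (γ x)

/-- When each `f x` is a point of the tight span of `δ₀`, this is the diversity of the tight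
span (Bryant–Tupper). The supremum is junk unless `δ₀` is bounded above and the `f x` are
nonnegative, which the lemmas below assume. -/
noncomputable def spanDelta (δ₀ : Finset E → ℝ) (f : ι → Finset E → ℝ) (F : Finset ι) : ℝ :=
  ⨆ γ : ι → Finset E, spanValue δ₀ f F γ

variable {δ₀ : Finset E → ℝ} {f : ι → Finset E → ℝ}

theorem spanDelta_le {F : Finset ι} {c : ℝ} (h : ∀ γ, spanValue δ₀ f F γ ≤ c) :
    spanDelta δ₀ f F ≤ c :=
  ciSup_le h

theorem spanValue_le {M : ℝ} (hδ₀ : ∀ S, δ₀ S ≤ M) (hf : ∀ x S, 0 ≤ f x S) (F : Finset ι)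
    (γ : ι → Finset E) : spanValue δ₀ f F γ ≤ M := by
  unfold spanValue
  linarith [hδ₀ (F.sup γ), sum_nonneg fun x (_ : x ∈ F) => hf x (γ x)]

theorem spanValue_le_spanDelta {M : ℝ} (hδ₀ : ∀ S, δ₀ S ≤ M) (hf : ∀ x S, 0 ≤ f x S)
    (F : Finset ι) (γ : ι → Finset E) : spanValue δ₀ f F γ ≤ spanDelta δ₀ f F :=
  le_ciSup ⟨M, Set.forall_mem_range.2 (spanValue_le hδ₀ hf F)⟩ γ

theorem spanDelta_nonneg {M : ℝ} (hδ₀ : ∀ S, δ₀ S ≤ M) (hf : ∀ x S, 0 ≤ f x S)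
    (h₀ : δ₀ ∅ = 0) (hf₀ : ∀ x, f x ∅ = 0) (F : Finset ι) : 0 ≤ spanDelta δ₀ f F := by
  have := spanValue_le_spanDelta hδ₀ hf F fun _ => ⊥
  rw [spanValue, sup_bot] at this
  simpa only [bot_eq_empty, h₀, hf₀, sum_const_zero, sub_zero] using this

theorem spanDelta_le_zero_of_card_le_one (h₀ : δ₀ ∅ = 0) (hbase : ∀ x S, δ₀ S ≤ f x S)
    {F : Finset ι} (hF : #F ≤ 1) : spanDelta δ₀ f F ≤ 0 := by
  refine spanDelta_le fun γ => ?_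
  rcases F.eq_empty_or_nonempty with rfl | ⟨a, ha⟩
  · simp [spanValue, h₀]
  · rw [eq_singleton_iff_unique_mem.2 ⟨ha, fun b hb => card_le_one.1 hF b hb a ha⟩, spanValue,
      sup_singleton, sum_singleton, sub_nonpos]
    exact hbase a (γ a)

theorem sup_piecewise_bot [DecidableEq ι] {F G : Finset ι} (h : F ⊆ G) (γ : ι → Finset E) :
    G.sup (F.piecewise γ ⊥) = F.sup γ := by
  rw [show F.piecewise γ ⊥ = fun x => if x ∈ F then γ x else ⊥ from rfl, sup_ite,
    filter_mem_eq_inter, inter_eq_right.2 h, sup_bot, sup_bot_eq]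

theorem sum_piecewise_bot [DecidableEq ι] (hf₀ : ∀ x, f x ∅ = 0) {F G : Finset ι} (h : F ⊆ G)
    (γ : ι → Finset E) : ∑ x ∈ G, f x (F.piecewise γ ⊥ x) = ∑ x ∈ F, f x (γ x) := by
  simp only [piecewise, apply_ite, Pi.bot_apply, bot_eq_empty, hf₀, sum_ite_mem,
    inter_eq_right.2 h]

theorem sum_sup_le (hsub : ∀ x S T, f x (S ∪ T) ≤ f x S + f x T) (F : Finset ι)
    (γ₁ γ₂ : ι → Finset E) :
    ∑ x ∈ F, f x ((γ₁ ⊔ γ₂) x) ≤ ∑ x ∈ F, f x (γ₁ x) + ∑ x ∈ F, f x (γ₂ x) := by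
  rw [← sum_add_distrib]
  exact sum_le_sum fun x _ => hsub x _ _

theorem spanDelta_mono [DecidableEq ι] {M : ℝ} (hδ₀ : ∀ S, δ₀ S ≤ M) (hf : ∀ x S, 0 ≤ f x S)
    (hf₀ : ∀ x, f x ∅ = 0) {F G : Finset ι} (h : F ⊆ G) :
    spanDelta δ₀ f F ≤ spanDelta δ₀ f G :=
  spanDelta_le fun γ => by
    have := spanValue_le_spanDelta hδ₀ hf G (F.piecewise γ ⊥)
    rwa [spanValue, sup_piecewise_bot h, sum_piecewise_bot hf₀ h] at this

theorem le_spanDelta_of_subset [DecidableEq ι] {M : ℝ} (hδ₀ : ∀ S, δ₀ S ≤ M) (hf : ∀ x S, 0 ≤ f x S)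
    (hf₀ : ∀ x, f x ∅ = 0) (hsub : ∀ x S T, f x (S ∪ T) ≤ f x S + f x T) {F G : Finset ι}
    (hFG : F ⊆ G) {b : ι} (hb : b ∈ G) (γ : ι → Finset E) (W : Finset E) :
    δ₀ (F.sup γ ∪ W) - ∑ x ∈ F, f x (γ x) - f b W ≤ spanDelta δ₀ f G := by
  have hbG : {b} ⊆ G := singleton_subset_iff.2 hb
  have := spanValue_le_spanDelta hδ₀ hf G
    (F.piecewise γ ⊥ ⊔ ({b} : Finset ι).piecewise (fun _ => W) ⊥)
  have hsum := sum_sup_le hsub G (F.piecewise γ ⊥) (({b} : Finset ι).piecewise (fun _ => W) ⊥)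
  rw [sum_piecewise_bot hf₀ hFG, sum_piecewise_bot hf₀ hbG, sum_singleton] at hsum
  rw [spanValue, sup_sup, sup_piecewise_bot hFG, sup_piecewise_bot hbG, sup_singleton] at this
  exact le_trans (by simp only [sup_eq_union]; linarith) this

theorem spanDelta_triangle [DecidableEq ι] {M : ℝ} (hδ₀ : ∀ S, δ₀ S ≤ M) (hf : ∀ x S, 0 ≤ f x S)
    (hf₀ : ∀ x, f x ∅ = 0) (hsub : ∀ x S T, f x (S ∪ T) ≤ f x S + f x T)
    (hdual : ∀ x S, ∃ V, f x S + f x V ≤ δ₀ (S ∪ V)) (A B C : Finset ι) (hB : B.Nonempty) :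
    spanDelta δ₀ f (A ∪ C) ≤ spanDelta δ₀ f (A ∪ B) + spanDelta δ₀ f (B ∪ C) := by
  obtain ⟨b, hb⟩ := hB
  refine spanDelta_le fun γ => ?_
  -- The union `W` of `γ` over `C \ A` is charged to `b` in a pattern on `A ∪ B`, a partner `V`
  -- of `W` is charged to `b` in a pattern on `B ∪ C`, and `hV` pays for both charges.
  obtain ⟨V, hV⟩ := hdual b ((C \ A).sup γ)
  have h₁ := le_spanDelta_of_subset hδ₀ hf hf₀ hsub (subset_union_left (s₂ := B))
    (mem_union_right A hb) γ ((C \ A).sup γ)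
  have h₂ := le_spanDelta_of_subset hδ₀ hf hf₀ hsub (F := C \ A)
    (sdiff_subset.trans subset_union_right) (mem_union_left C hb) γ V
  rw [spanValue, ← union_sdiff_self_eq_union, sup_union, sum_union disjoint_sdiff, sup_eq_union]
  linarith

end Span

/-- Natural subtraction makes `baseDelta ∅ = 0`. -/
def baseDelta (S : Finset (Fin 3)) : ℝ := 2 * (#S - 1 : ℕ)

theorem baseDelta_nonneg (S : Finset (Fin 3)) : 0 ≤ baseDelta S := by
  unfold baseDelta; positivity

theorem baseDelta_le_four (S : Finset (Fin 3)) : baseDelta S ≤ 4 := by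
  have : #S - 1 ≤ 2 := by have := card_le_univ S; simp at this; omega
  unfold baseDelta; norm_cast; omega

theorem two_le_baseDelta {S : Finset (Fin 3)} (h : 2 ≤ #S) : 2 ≤ baseDelta S := by
  unfold baseDelta; norm_cast; omega

theorem baseDelta_insert_le (i : Fin 3) (S : Finset (Fin 3)) :
    baseDelta (insert i S) ≤ baseDelta S + 2 := by
  have := card_insert_le i S
  unfold baseDelta; norm_cast; omega

theorem baseDelta_union_le (A B : Finset (Fin 3)) (i j : Fin 3) :
    baseDelta (A ∪ B) ≤ baseDelta (insert i A) + baseDelta (insert j B) + 2 := by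
  have := card_union_le A B
  have := card_le_card (subset_insert i A)
  have := card_le_card (subset_insert j B)
  have := card_pos.2 (insert_nonempty i A)
  have := card_pos.2 (insert_nonempty j B)
  unfold baseDelta; norm_cast; omega

@[simp] theorem baseDelta_empty : baseDelta ∅ = 0 := by simp [baseDelta]

@[simp] theorem baseDelta_singleton (i : Fin 3) : baseDelta {i} = 0 := by simp [baseDelta]

@[simp] theorem baseDelta_univ : baseDelta univ = 4 := by norm_num [baseDelta]

@[simp] theorem baseDelta_compl_singleton (i : Fin 3) : baseDelta {i}ᶜ = 2 := by
  norm_num [baseDelta, card_compl]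

theorem baseDelta_pair {i j : Fin 3} (h : i ≠ j) : baseDelta {i, j} = 2 := by
  norm_num [baseDelta, card_pair h]

/-- A point of the tight span is a function on subsets of `Fin 3`, determined by its values `a`
on singletons; `extension a` is that function. -/
def extension (a : Fin 3 → ℝ) (S : Finset (Fin 3)) : ℝ :=
  if #S ≤ 1 then ∑ i ∈ S, a i else if #S = 2 then 4 - ∑ i ∈ Sᶜ, a i else 4

def tightSpan : Set (Fin 3 → ℝ) :=
  {a | (∀ i, a i ≤ 2) ∧ (∀ i j, i ≠ j → 2 ≤ a i + a j) ∧ 4 ≤ a 0 + a 1 + a 2}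

theorem Finset.fin3_cases (S : Finset (Fin 3)) :
    S = ∅ ∨ (∃ i, S = {i}) ∨ (∃ i, S = {i}ᶜ) ∨ S = univ := by
  revert S; decide

theorem Finset.fin3_eq (S : Finset (Fin 3)) :
    S = ∅ ∨ S = {0} ∨ S = {1} ∨ S = {2} ∨ S = {1, 2} ∨ S = {0, 2} ∨ S = {0, 1} ∨ S = univ := by
  revert S; decide

theorem Finset.sum_fin3 (S : Finset (Fin 3)) (a : Fin 3 → ℝ) : ∑ i ∈ S, a i =
    (if 0 ∈ S then a 0 else 0) + (if 1 ∈ S then a 1 else 0) + (if 2 ∈ S then a 2 else 0) := by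
  rw [← Fin.sum_univ_three (fun i => if i ∈ S then a i else 0), sum_ite_mem, univ_inter]

@[simp] theorem extension_empty (a : Fin 3 → ℝ) : extension a ∅ = 0 := by simp [extension]

@[simp] theorem extension_singleton (a : Fin 3 → ℝ) (i : Fin 3) : extension a {i} = a i := by
  simp [extension]

@[simp] theorem extension_compl_singleton (a : Fin 3 → ℝ) (i : Fin 3) :
    extension a {i}ᶜ = 4 - a i := by
  simp [extension, card_compl]

@[simp] theorem extension_univ (a : Fin 3 → ℝ) : extension a univ = 4 := by simp [extension]

theorem extension_add_extension_compl (a : Fin 3 → ℝ) (S : Finset (Fin 3)) :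
    extension a S + extension a Sᶜ = baseDelta (S ∪ Sᶜ) := by
  rw [union_compl, baseDelta_univ]
  rcases S.fin3_cases with rfl | ⟨i, rfl⟩ | ⟨i, rfl⟩ | rfl <;> simp

namespace tightSpan

variable (x : tightSpan)

theorem nonneg (i : Fin 3) : 0 ≤ x.1 i := by
  linarith [x.2.1 (i + 1), x.2.2.1 i (i + 1) (by fin_cases i <;> decide)]

theorem extension_nonneg (S : Finset (Fin 3)) : 0 ≤ extension x S := by
  rcases S.fin3_cases with rfl | ⟨i, rfl⟩ | ⟨i, rfl⟩ | rfl <;> simp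
  · exact nonneg x i
  · exact x.2.1 i |>.trans (by norm_num)

theorem baseDelta_le_extension (S : Finset (Fin 3)) : baseDelta S ≤ extension x S := by
  rcases S.fin3_cases with rfl | ⟨i, rfl⟩ | ⟨i, rfl⟩ | rfl <;> simp
  · exact nonneg x i
  · linarith [x.2.1 i]

theorem extension_union_le (S T : Finset (Fin 3)) :
    extension x (S ∪ T) ≤ extension x S + extension x T := by
  obtain ⟨h₂, hpair, hsum⟩ := x.2
  rcases S.fin3_eq with rfl | rfl | rfl | rfl | rfl | rfl | rfl | rfl <;>
  rcases T.fin3_eq with rfl | rfl | rfl | rfl | rfl | rfl | rfl | rfl <;>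
  simp +decide only [extension, sum_fin3, ↓reduceIte, add_zero, zero_add] <;>
  linarith [h₂ 0, h₂ 1, h₂ 2, hpair 0 1 (by decide), hpair 0 2 (by decide),
    hpair 1 2 (by decide)]

end tightSpan

noncomputable def tightSpanDelta : Finset tightSpan → ℝ :=
  spanDelta baseDelta fun x : tightSpan => extension x

theorem spanValue_le_tightSpanDelta (F : Finset tightSpan) (γ : tightSpan → Finset (Fin 3)) :
    spanValue baseDelta (fun x : tightSpan => extension x) F γ ≤ tightSpanDelta F :=
  spanValue_le_spanDelta baseDelta_le_four tightSpan.extension_nonneg F γ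

namespace tightSpanDelta

theorem nonneg (F : Finset tightSpan) : 0 ≤ tightSpanDelta F :=
  spanDelta_nonneg baseDelta_le_four tightSpan.extension_nonneg baseDelta_empty
    (fun x => extension_empty x) F

theorem le_four (F : Finset tightSpan) : tightSpanDelta F ≤ 4 :=
  spanDelta_le fun γ => spanValue_le baseDelta_le_four tightSpan.extension_nonneg F γ

theorem le_of_subset {F G : Finset tightSpan} (h : F ⊆ G) : tightSpanDelta F ≤ tightSpanDelta G :=
  spanDelta_mono baseDelta_le_four tightSpan.extension_nonneg
    (fun x => extension_empty x) h

theorem triangle (A B C : Finset tightSpan) (hB : B.Nonempty) :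
    tightSpanDelta (A ∪ C) ≤ tightSpanDelta (A ∪ B) + tightSpanDelta (B ∪ C) :=
  spanDelta_triangle baseDelta_le_four tightSpan.extension_nonneg
    (fun x => extension_empty x) tightSpan.extension_union_le
    (fun x S => ⟨Sᶜ, (extension_add_extension_compl x S).le⟩) A B C hB

theorem sub_le_pair {x y : tightSpan} (hxy : x ≠ y) (i : Fin 3) :
    x.1 i - y.1 i ≤ tightSpanDelta {x, y} := by
  have := spanValue_le_tightSpanDelta {x, y} fun z => if z = x then {i}ᶜ else {i}
  rw [spanValue, sup_insert, sup_singleton, sum_pair hxy, if_pos rfl, if_neg hxy.symm,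
    sup_eq_union, union_comm, union_compl, baseDelta_univ, extension_compl_singleton,
    extension_singleton] at this
  linarith

theorem eq_zero_iff (A : Finset tightSpan) : tightSpanDelta A = 0 ↔ #A ≤ 1 := by
  refine ⟨fun h => ?_, fun h => le_antisymm ?_ (nonneg A)⟩
  · by_contra! hA
    obtain ⟨x, hx, y, hy, hxy⟩ := one_lt_card.1 hA
    have hle : tightSpanDelta {x, y} ≤ 0 := h ▸ le_of_subset (insert_subset hx (by simpa))
    refine hxy (Subtype.ext (funext fun i => le_antisymm ?_ ?_))
    · linarith [sub_le_pair hxy i]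
    · have := sub_le_pair hxy.symm i
      rw [pair_comm] at this
      linarith
  · exact spanDelta_le_zero_of_card_le_one baseDelta_empty
      tightSpan.baseDelta_le_extension h

end tightSpanDelta

noncomputable def tightSpanDiversity : Diversity tightSpan where
  delta := tightSpanDelta
  nonneg := tightSpanDelta.nonneg
  eq_zero_iff := tightSpanDelta.eq_zero_iff
  triangle := tightSpanDelta.triangle

def kuratowski (i : Fin 3) : Fin 3 → ℝ := fun j => if j = i then 0 else 2

theorem kuratowski_mem (i : Fin 3) : kuratowski i ∈ tightSpan := by
  fin_cases i <;> refine ⟨fun j => ?_, fun j k hjk => ?_, ?_⟩ <;> (try fin_cases j) <;>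
    (try fin_cases k) <;> simp +decide [kuratowski] at * <;> norm_num

theorem extension_kuratowski (i : Fin 3) (S : Finset (Fin 3)) :
    extension (kuratowski i) S = baseDelta (insert i S) := by
  rcases S.fin3_eq with rfl | rfl | rfl | rfl | rfl | rfl | rfl | rfl <;> fin_cases i <;>
    simp +decide [baseDelta, extension, sum_fin3, kuratowski] <;> norm_num

def kuratowskiPoint (i : Fin 3) : tightSpan := ⟨kuratowski i, kuratowski_mem i⟩

@[simp] theorem coe_kuratowskiPoint (i : Fin 3) :
    (kuratowskiPoint i : Fin 3 → ℝ) = kuratowski i :=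
  rfl

theorem tightSpanDelta_kuratowskiPoint_pair_le (i j : Fin 3) :
    tightSpanDelta {kuratowskiPoint i, kuratowskiPoint j} ≤ 2 := by
  rcases eq_or_ne (kuratowskiPoint i) (kuratowskiPoint j) with hij | hij
  · rw [hij, pair_eq_singleton, (tightSpanDelta.eq_zero_iff _).2 (card_singleton _).le]
    norm_num
  refine spanDelta_le fun γ => ?_
  rw [spanValue, sup_insert, sup_singleton, sum_pair hij, sup_eq_union, coe_kuratowskiPoint,
    coe_kuratowskiPoint, extension_kuratowski, extension_kuratowski]
  linarith [baseDelta_union_le (γ (kuratowskiPoint i)) (γ (kuratowskiPoint j)) i j]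

theorem four_le_tightSpanDelta_kuratowskiPoint_triple :
    4 ≤ tightSpanDelta {kuratowskiPoint 0, kuratowskiPoint 1, kuratowskiPoint 2} := by
  set γ : tightSpan → Finset (Fin 3) := fun x => univ.filter fun j => x.1 j = 0
  have hγ (i : Fin 3) : γ (kuratowskiPoint i) = {i} := by ext j; simp [γ, kuratowski]
  have hsum : ∀ x ∈ ({kuratowskiPoint 0, kuratowskiPoint 1, kuratowskiPoint 2} : Finset _),
      extension x (γ x) = 0 := by
    simp only [mem_insert, mem_singleton]
    rintro x (rfl | rfl | rfl) <;> simp [hγ, kuratowski]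
  have := spanValue_le_tightSpanDelta {kuratowskiPoint 0, kuratowskiPoint 1, kuratowskiPoint 2} γ
  rw [spanValue, sum_eq_zero hsum, sup_insert, sup_insert, sup_singleton, hγ, hγ, hγ,
    show ({0} ⊔ ({1} ⊔ {2}) : Finset (Fin 3)) = univ by decide, baseDelta_univ] at this
  linarith

section Hyperconvex

open scoped Pointwise

variable {r : Finset tightSpan → ℝ}

/-- Upper bounds for the cost of covering `U` by a pattern on the sets of a family `𝒜`, each set
`A` of the family paid for by `r A`. -/
def demandSet (r : Finset tightSpan → ℝ) (U : Finset (Fin 3)) : Set ℝ :=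
  {c | ∃ (𝒜 : Finset (Finset tightSpan)) (γ : tightSpan → Finset (Fin 3)),
    (𝒜.sup id).sup γ = U ∧ ∑ x ∈ 𝒜.sup id, extension x (γ x) + ∑ A ∈ 𝒜, r A ≤ c}

noncomputable def demand (r : Finset tightSpan → ℝ) (U : Finset (Fin 3)) : ℝ :=
  sInf (demandSet r U)

theorem demandSet_nonempty (U : Finset (Fin 3)) : (demandSet r U).Nonempty :=
  ⟨_, {{kuratowskiPoint 0}}, fun _ => U, by simp, le_rfl⟩

/-- The cap at `2` keeps `witness r` in `tightSpan`. -/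
noncomputable def witness (r : Finset tightSpan → ℝ) : Fin 3 → ℝ := fun i => min (demand r {i}) 2

theorem witness_le_two (i : Fin 3) : witness r i ≤ 2 := min_le_right _ _

variable (hr : ∀ 𝒜 : Finset (Finset tightSpan), tightSpanDelta (𝒜.sup id) ≤ ∑ A ∈ 𝒜, r A)
include hr

theorem nonneg_of_admissible (A : Finset tightSpan) : 0 ≤ r A :=
  (tightSpanDelta.nonneg A).trans (by simpa using hr {A})

theorem baseDelta_le_of_mem_demandSet {U : Finset (Fin 3)} {c : ℝ} (hc : c ∈ demandSet r U) :
    baseDelta U ≤ c := by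
  obtain ⟨𝒜, γ, rfl, hc⟩ := hc
  have := spanValue_le_tightSpanDelta (𝒜.sup id) γ
  rw [spanValue] at this
  linarith [hr 𝒜]

theorem add_mem_demandSet {U V : Finset (Fin 3)} {c c' : ℝ} (hc : c ∈ demandSet r U)
    (hc' : c' ∈ demandSet r V) : c + c' ∈ demandSet r (U ∪ V) := by
  obtain ⟨𝒜, γ, rfl, hc⟩ := hc
  obtain ⟨𝒜', γ', rfl, hc'⟩ := hc'
  set F := 𝒜.sup id
  set F' := 𝒜'.sup id
  have hF : (𝒜 ∪ 𝒜').sup id = F ∪ F' := sup_union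
  refine ⟨𝒜 ∪ 𝒜', F.piecewise γ ⊥ ⊔ F'.piecewise γ' ⊥, ?_, ?_⟩
  · rw [hF, sup_sup, sup_piecewise_bot subset_union_left, sup_piecewise_bot subset_union_right,
      sup_eq_union]
  · have hsum := sum_sup_le tightSpan.extension_union_le (F ∪ F')
      (F.piecewise γ ⊥) (F'.piecewise γ' ⊥)
    rw [sum_piecewise_bot (fun x : tightSpan => extension_empty x) subset_union_left,
      sum_piecewise_bot (fun x : tightSpan => extension_empty x) subset_union_right] at hsum
    have hr' : ∑ A ∈ 𝒜 ∪ 𝒜', r A ≤ ∑ A ∈ 𝒜, r A + ∑ A ∈ 𝒜', r A := by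
      rw [← sum_union_inter]
      linarith [sum_nonneg fun A (_ : A ∈ 𝒜 ∩ 𝒜') => nonneg_of_admissible hr A]
    rw [hF]
    linarith

theorem demandSet_bddBelow (U : Finset (Fin 3)) : BddBelow (demandSet r U) :=
  ⟨0, fun _ hc => (baseDelta_nonneg U).trans (baseDelta_le_of_mem_demandSet hr hc)⟩

theorem baseDelta_le_demand (U : Finset (Fin 3)) : baseDelta U ≤ demand r U :=
  le_csInf (demandSet_nonempty U) fun _ => baseDelta_le_of_mem_demandSet hr

theorem demand_nonneg (U : Finset (Fin 3)) : 0 ≤ demand r U :=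
  (baseDelta_nonneg U).trans (baseDelta_le_demand hr U)

theorem demand_le (Y : Finset tightSpan) (γ : tightSpan → Finset (Fin 3)) :
    demand r (Y.sup γ) ≤ ∑ x ∈ Y, extension x (γ x) + r Y :=
  csInf_le (demandSet_bddBelow hr _) ⟨{Y}, γ, by simp, by simp⟩

theorem demand_union_le (U V : Finset (Fin 3)) :
    demand r (U ∪ V) ≤ demand r U + demand r V := by
  unfold demand
  rw [← csInf_add (demandSet_nonempty U) (demandSet_bddBelow hr U)
    (demandSet_nonempty V) (demandSet_bddBelow hr V)]
  refine csInf_le_csInf (demandSet_bddBelow hr _) ((demandSet_nonempty U).add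
    (demandSet_nonempty V)) ?_
  rintro _ ⟨c, hc, c', hc', rfl⟩
  exact add_mem_demandSet hr hc hc'

theorem witness_mem : witness r ∈ tightSpan := by
  have hpair {i j : Fin 3} (h : i ≠ j) : 2 ≤ demand r {i} + demand r {j} := by
    have := (baseDelta_le_demand hr _).trans (demand_union_le hr {i} {j})
    rwa [← insert_eq, baseDelta_pair h] at this
  have htriple : 4 ≤ demand r {0} + demand r {1} + demand r {2} := by
    have := (baseDelta_le_demand hr _).trans (demand_union_le hr ({0} ∪ {1}) {2})
    rw [show ({0} ∪ {1} ∪ {2} : Finset (Fin 3)) = univ by decide, baseDelta_univ] at this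
    linarith [demand_union_le hr {0} {1}]
  have h₀ := demand_nonneg hr
  refine ⟨witness_le_two, fun i j hij => ?_, ?_⟩ <;> simp only [witness, min_def]
  · have := hpair hij
    split_ifs <;> linarith [h₀ {i}, h₀ {j}]
  · have := hpair (i := 0) (j := 1) (by decide)
    have := hpair (i := 0) (j := 2) (by decide)
    have := hpair (i := 1) (j := 2) (by decide)
    split_ifs <;> linarith [h₀ {0}, h₀ {1}, h₀ {2}]

theorem witness_le_demand {i : Fin 3} {U : Finset (Fin 3)} (hi : i ∈ U) :
    witness r i ≤ demand r U := by
  rcases eq_or_ne U {i} with rfl | hU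
  · exact min_le_left _ _
  · have : 2 ≤ #U := by
      by_contra! h
      exact hU (eq_singleton_iff_unique_mem.2 ⟨hi, fun j hj => card_le_one.1 (by omega) j hj i hi⟩)
    linarith [two_le_baseDelta this, baseDelta_le_demand hr U, witness_le_two (r := r) i]

theorem baseDelta_le_extension_witness_add_demand (S U : Finset (Fin 3)) :
    baseDelta (S ∪ U) ≤ extension (witness r) S + demand r U := by
  rcases S.fin3_cases with rfl | ⟨i, rfl⟩ | ⟨i, rfl⟩ | rfl
  · simpa using baseDelta_le_demand hr U
  · rw [extension_singleton, witness, ← min_add_add_right]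
    refine le_min ((baseDelta_le_demand hr _).trans (demand_union_le hr _ _)) ?_
    rw [← insert_eq]
    linarith [baseDelta_insert_le i U, baseDelta_le_demand hr U]
  · rw [extension_compl_singleton]
    by_cases hi : i ∈ U
    · rw [eq_univ_of_forall (s := {i}ᶜ ∪ U) fun j => by by_cases hj : j = i <;> simp [hj, hi],
        baseDelta_univ]
      linarith [witness_le_demand hr hi]
    · rw [union_eq_left.2 (by simpa [subset_compl_comm] using hi), baseDelta_compl_singleton]
      linarith [demand_nonneg hr U, witness_le_two (r := r) i]
  · rw [extension_univ]
    linarith [baseDelta_le_four (univ ∪ U), demand_nonneg hr U]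

end Hyperconvex

theorem tightSpanDiversity_hyperconvex : tightSpanDiversity.Hyperconvex := by
  intro r _ hr
  refine ⟨⟨witness r, witness_mem hr⟩, fun Y => ?_⟩
  by_cases hz : ⟨witness r, witness_mem hr⟩ ∈ Y
  · rw [insert_eq_of_mem hz]
    simpa using hr {Y}
  refine spanDelta_le fun γ => ?_
  rw [spanValue, sup_insert, sum_insert hz, sup_eq_union]
  linarith [baseDelta_le_extension_witness_add_demand hr (γ ⟨witness r, witness_mem hr⟩) (Y.sup γ),
    demand_le hr Y γ]

theorem tightSpanDiversity_not_inducedHyperconvex : ¬ tightSpanDiversity.InducedHyperconvex :=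
  tightSpanDiversity.not_inducedHyperconvex_of_delta_triple zero_le_one
    ((tightSpanDelta_kuratowskiPoint_pair_le 0 1).trans_eq (mul_one 2).symm)
    ((tightSpanDelta_kuratowskiPoint_pair_le 0 2).trans_eq (mul_one 2).symm)
    ((tightSpanDelta_kuratowskiPoint_pair_le 1 2).trans_eq (mul_one 2).symm)
    ((by norm_num : (3 : ℝ) * 1 < 4).trans_le four_le_tightSpanDelta_kuratowskiPoint_triple)

/-- There exists a bounded hyperconvex diversity `(X, δ)` whose
induced metric space `(X, d)`, `d(x,y) = δ {x,y}` (which is bounded as well), is not a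
hyperconvex metric space. -/
theorem exists_bounded_hyperconvex_diversity_with_nonhyperconvex_induced_metric :
    ∃ (X : Type) (_ : DecidableEq X) (D : Diversity X),
      D.Hyperconvex ∧
      (∃ M : ℝ, 0 ≤ M ∧ ∀ A : Finset X, D.delta A ≤ M) ∧
      ¬ D.InducedHyperconvex :=
  ⟨tightSpan, inferInstance, tightSpanDiversity, tightSpanDiversity_hyperconvex,
    ⟨4, by norm_num, tightSpanDelta.le_four⟩, tightSpanDiversity_not_inducedHyperconvex⟩
end

section
/- Let (X, δ) be a diversity and let T_X be its tight span. For every nonempty finite subset F ⊆ T_X, the quantity δ_T(F) = sup over all assignments f ↦ A_f (A_f a finite subset of X, for f ∈ F) of [ δ(⋃_{f∈F} A_f) − Σ_{f∈F} f(A_f) ] is unchanged if the supremum is restricted to assignments whose sets A_f are pairwise disjoint; that is, δ_T(F) = sup{ δ(⋃_{f∈F} A_f) − Σ_{f∈F} f(A_f) : A_f finite subsets of X with A_g ∩ A_h = ∅ for g ≠ h }. -/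
namespace Diversity

variable {X : Type*} [DecidableEq X]

/-- Membership in `P_X`: `f ∅ = 0` and `∑_{A ∈ 𝒜} f A ≥ δ(⋃_{A ∈ 𝒜} A)` for every
finite collection `𝒜` of finite subsets of `X`. -/
def MemP (D : Diversity X) (f : Finset X → ℝ) : Prop :=
  f ∅ = 0 ∧ ∀ 𝒜 : Finset (Finset X), D.delta (𝒜.sup id) ≤ ∑ A ∈ 𝒜, f A

/-- Membership in the tight span `T_X`: `f ∈ P_X` and `f` is minimal in `P_X` under the
pointwise order. -/
def MemTightSpan (D : Diversity X) (f : Finset X → ℝ) : Prop :=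
  D.MemP f ∧ ∀ g : Finset X → ℝ, D.MemP g → (∀ A, g A ≤ f A) → g = f

end Diversity

/-! Elements of the tight span are monotone: lowering `f A` to `f B` for `A ⊆ B` keeps `f` in
`P_X`, so by minimality `f A ≤ f B`. Hence replacing an assignment `i ↦ A i` by its
disjointification `A i \ ⋃_{j < i} A j` (for some ordering of the index set) keeps the union,
and so the `δ`-term, and can only decrease `∑ F i (A i)`. -/

namespace Diversity

open Finset

variable {X : Type*} [DecidableEq X] (D : Diversity X)

lemma delta_singleton (x : X) : D.delta {x} = 0 :=
  (D.eq_zero_iff _).2 (card_singleton x).le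

lemma delta_le_delta_insert (A : Finset X) (b : X) : D.delta A ≤ D.delta (insert b A) := by
  simpa [delta_singleton, union_comm, ← insert_eq] using D.triangle A {b} ∅ (singleton_nonempty b)

lemma delta_mono : Monotone D.delta :=
  monotone_iff_forall_le_insert.2 fun A b _ => D.delta_le_delta_insert A b

variable {D} {f : Finset X → ℝ}

lemma MemP.delta_le (hf : D.MemP f) (A : Finset X) : D.delta A ≤ f A := by
  simpa using hf.2 {A}

lemma MemP.nonneg (hf : D.MemP f) (A : Finset X) : 0 ≤ f A :=
  (D.nonneg A).trans (hf.delta_le A)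

lemma MemP.comp_of_subset (hf : D.MemP f) {φ : Finset X → Finset X} (hφ : ∀ C, C ⊆ φ C)
    (hφ_empty : φ ∅ = ∅) : D.MemP (f ∘ φ) := by
  refine ⟨by simpa [hφ_empty] using hf.1, fun 𝒜 => ?_⟩
  calc D.delta (𝒜.sup id)
      ≤ D.delta ((𝒜.image φ).sup id) :=
        D.delta_mono (by rw [sup_image]; exact sup_mono_fun fun C _ => hφ C)
    _ ≤ ∑ C ∈ 𝒜.image φ, f C := hf.2 _
    _ ≤ ∑ C ∈ 𝒜, f (φ C) := sum_image_le_of_nonneg fun C _ => hf.nonneg C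

lemma MemTightSpan.mono (hf : D.MemTightSpan f) : Monotone f := by
  intro A B hAB
  obtain rfl | hA := A.eq_empty_or_nonempty
  · rw [hf.1.1]
    exact hf.1.nonneg B
  by_contra! hlt
  set φ : Finset X → Finset X := Function.update id A B
  have hφ (C : Finset X) : C ⊆ φ C := by
    by_cases hC : C = A
    · simpa [φ, hC] using hAB
    · simp [φ, hC]
  have hP : D.MemP (f ∘ φ) := hf.1.comp_of_subset hφ (by simp [φ, hA.ne_empty.symm])
  have hle (C : Finset X) : (f ∘ φ) C ≤ f C := by
    by_cases hC : C = A
    · simpa [φ, hC] using hlt.le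
    · simp [φ, hC]
  have hA_eq := congrFun (hf.2 _ hP hle) A
  simp only [Function.comp_apply, φ, Function.update_self] at hA_eq
  exact hlt.ne hA_eq

lemma exists_pairwise_disjoint_le_value {ι : Type*} [Fintype ι] {F : ι → Finset X → ℝ}
    (hF : ∀ i, D.MemTightSpan (F i)) (A : ι → Finset X) :
    ∃ A' : ι → Finset X, (∀ i j, i ≠ j → Disjoint (A' i) (A' j)) ∧
      D.delta (univ.sup A) - ∑ i, F i (A i) ≤ D.delta (univ.sup A') - ∑ i, F i (A' i) := by
  obtain ⟨A', hA'_le, hA'_sup, hA'_disj⟩ := Fintype.exists_disjointed_le A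
  refine ⟨A', fun i j hij => hA'_disj hij, ?_⟩
  rw [hA'_sup]
  gcongr with i
  exact (hF i).mono (hA'_le i)

end Diversity

theorem tightSpan_diversity_sup_pairwise_disjoint_general
    {X : Type*} [DecidableEq X] (D : Diversity X)
    {ι : Type*} [Fintype ι]
    (F : ι → Finset X → ℝ)
    (hF : ∀ i, D.MemTightSpan (F i)) :
    sSup {v : ℝ | ∃ A : ι → Finset X,
        v = D.delta (Finset.univ.sup A) - ∑ i, F i (A i)} =
    sSup {v : ℝ | ∃ A : ι → Finset X,
        (∀ i j, i ≠ j → Disjoint (A i) (A j)) ∧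
        v = D.delta (Finset.univ.sup A) - ∑ i, F i (A i)} := by
  refine csSup_eq_csSup_of_forall_exists_le ?_ ?_
  · rintro _ ⟨A, rfl⟩
    obtain ⟨A', hA'_disj, hle⟩ := Diversity.exists_pairwise_disjoint_le_value hF A
    exact ⟨_, ⟨A', hA'_disj, rfl⟩, hle⟩
  · rintro _ ⟨A, -, rfl⟩
    exact ⟨_, ⟨A, rfl⟩, le_rfl⟩

/-- Let `(X, δ)` be a diversity and `F = (F i)_{i ∈ ι}` a nonempty
finite (injectively indexed) family of elements of the tight span `T_X`. Then the
supremum defining `δ_T(F)`, taken over all assignments `i ↦ A i` of finite subsets of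
`X`, equals the supremum restricted to assignments with pairwise disjoint sets. -/
theorem tightSpan_diversity_sup_pairwise_disjoint
    {X : Type*} [DecidableEq X] (D : Diversity X)
    {ι : Type*} [Fintype ι] [Nonempty ι]
    (F : ι → Finset X → ℝ)
    (hF : ∀ i, D.MemTightSpan (F i))
    (hFinj : Function.Injective F) :
    sSup {v : ℝ | ∃ A : ι → Finset X,
        v = D.delta (Finset.univ.sup A) - ∑ i, F i (A i)} =
    sSup {v : ℝ | ∃ A : ι → Finset X,
        (∀ i j, i ≠ j → Disjoint (A i) (A j)) ∧
        v = D.delta (Finset.univ.sup A) - ∑ i, F i (A i)} :=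
  tightSpan_diversity_sup_pairwise_disjoint_general D F hF
end

section
/- Let (X, d) be a metric space, let Y ⊆ X be nonempty, and let r : Y → [0, ∞) satisfy d(y, y') ≤ r(y) + r(y') for all y, y' ∈ Y. Then r can be extended to a function r : X → [0, ∞) satisfying d(x, x') ≤ r(x) + r(x') for all x, x' ∈ X. -/
/-!
Away from `Y`, extend `r` by the infimal convolution `I x = inf_{y ∈ Y} (d(x, y) + r y)`.
The hypothesis on `r` together with the triangle inequality gives `d(x, y) ≤ I x + r y`,
and taking the infimum over `y` once more gives `d(x, x') ≤ I x + I x'`. Nonnegativity of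
any such `R` is automatic, since `0 = d(x, x) ≤ 2 R x`.
-/

section

variable {X : Type*} [PseudoMetricSpace X]

theorem nonneg_of_forall_dist_le_add {R : X → ℝ} (hR : ∀ x x', dist x x' ≤ R x + R x')
    (x : X) : 0 ≤ R x := by
  linarith [dist_self x ▸ hR x x]

noncomputable def infDistAdd (Y : Set X) (r : Y → ℝ) (x : X) : ℝ :=
  ⨅ y : Y, (dist x y + r y)

open Classical in
noncomputable def radiusExtension (Y : Set X) (r : Y → ℝ) (x : X) : ℝ :=
  if hx : x ∈ Y then r ⟨x, hx⟩ else infDistAdd Y r x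

section Extension

variable {Y : Set X} {r : Y → ℝ}

theorem radiusExtension_coe (y : Y) : radiusExtension Y r y = r y := by
  simp [radiusExtension]

variable [Nonempty Y] (hr : ∀ y y' : Y, dist (y : X) y' ≤ r y + r y')
include hr

theorem dist_le_infDistAdd_add (x : X) (y' : Y) : dist x y' ≤ infDistAdd Y r x + r y' := by
  suffices dist x y' - r y' ≤ infDistAdd Y r x by linarith
  refine le_ciInf fun y => ?_
  linarith [dist_triangle x y y', hr y y']

theorem dist_le_infDistAdd_add_infDistAdd (x x' : X) :
    dist x x' ≤ infDistAdd Y r x + infDistAdd Y r x' := by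
  suffices dist x x' - infDistAdd Y r x ≤ infDistAdd Y r x' by linarith
  refine le_ciInf fun y => ?_
  linarith [dist_triangle x y x', dist_comm (y : X) x', dist_le_infDistAdd_add hr x y]

theorem dist_le_radiusExtension_add (x x' : X) :
    dist x x' ≤ radiusExtension Y r x + radiusExtension Y r x' := by
  unfold radiusExtension
  split_ifs with hx hx' hx'
  · exact hr ⟨x, hx⟩ ⟨x', hx'⟩
  · rw [dist_comm, add_comm]
    exact dist_le_infDistAdd_add hr x' ⟨x, hx⟩
  · exact dist_le_infDistAdd_add hr x ⟨x', hx'⟩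
  · exact dist_le_infDistAdd_add_infDistAdd hr x x'

end Extension

end

theorem exists_extension_of_radius_function_general
    {X : Type*} [MetricSpace X] (Y : Set X) (hY : Y.Nonempty)
    (r : Y → ℝ)
    (hr : ∀ y y' : Y, dist (y : X) (y' : X) ≤ r y + r y') :
    ∃ R : X → ℝ, (∀ x : X, 0 ≤ R x) ∧ (∀ y : Y, R y = r y) ∧
      ∀ x x' : X, dist x x' ≤ R x + R x' := by
  have : Nonempty Y := hY.to_subtype
  have hR := dist_le_radiusExtension_add hr
  exact ⟨radiusExtension Y r, nonneg_of_forall_dist_le_add hR, radiusExtension_coe, hR⟩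

/-- Let `(X, d)` be a metric space, `Y ⊆ X` nonempty, and let
`r : Y → [0, ∞)` satisfy `d(y, y') ≤ r y + r y'` for all `y, y' ∈ Y`. Then `r` extends
to a function `R : X → [0, ∞)` with `d(x, x') ≤ R x + R x'` for all `x, x' ∈ X`. -/
theorem exists_extension_of_radius_function
    {X : Type*} [MetricSpace X] (Y : Set X) (hY : Y.Nonempty)
    (r : Y → ℝ) (hr0 : ∀ y : Y, 0 ≤ r y)
    (hr : ∀ y y' : Y, dist (y : X) (y' : X) ≤ r y + r y') :
    ∃ R : X → ℝ, (∀ x : X, 0 ≤ R x) ∧ (∀ y : Y, R y = r y) ∧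
      ∀ x x' : X, dist x x' ≤ R x + R x' :=
  exists_extension_of_radius_function_general Y hY r hr
end
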